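/- arXiv:2512.04610 — 2 statements merged into one kernel-verified Lean document; each statement's English description precedes it below -/
import Mathlib

section
/- Let G be a graph and ℱ = {F₁,…,F_k} a set of k flips. Then there exists a set of flips ℱ' with |ℱ'| ≤ C(2^{2k}+1, 2) (binomial coefficient) such that G ⊕ ℱ = G ⊕ ℱ' and no pair of vertices has its adjacency flipped by more than one flip in ℱ'. -/
/-!
Whether the pair `u, v` ends up flipped depends only on the parity of the number of flips of `L`
that flip it, and this parity is determined by the signatures of `u` and `v`: the record, for each
flip `(A, B)` of `L`, of whether the vertex lies in `A` and whether it lies in `B`. There are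
`4 ^ k` signatures for `k` flips, and the vertices of each signature form one part of a partition
of `V`. Flipping between the parts `P, Q` for every unordered pair of signatures `{P, Q}` of odd
parity (`P = Q` allowed) gives an equivalent family of at most `C(4 ^ k + 1, 2)` flips, and each
pair of vertices is flipped by at most one of them: the one indexed by the pair of their signatures.
-/

/-- The flip of a graph `G` on a pair of vertex sets `(A, B)`: the adjacency between
every pair of distinct vertices `u ∈ A`, `v ∈ B` is complemented. -/
def gflip {V : Type*} (G : SimpleGraph V) (A B : Set V) : SimpleGraph V where
  Adj u v := u ≠ v ∧ Xor' (G.Adj u v) ((u ∈ A ∧ v ∈ B) ∨ (u ∈ B ∧ v ∈ A))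
  symm := ⟨by
    intro u v hx
    obtain ⟨h, hx⟩ := hx
    refine ⟨h.symm, ?_⟩
    have hGA : G.Adj v u ↔ G.Adj u v := ⟨fun h => h.symm, fun h => h.symm⟩
    unfold Xor' at *
    unfold Xor at *
    tauto⟩
  loopless := ⟨by intro v hx; exact hx.1 rfl⟩

/-- Applying a list of flips `L` to `G`, in order. -/
def gflipAll {V : Type*} (G : SimpleGraph V) (L : List (Set V × Set V)) : SimpleGraph V :=
  L.foldl (fun H F => gflip H F.1 F.2) G

/-- The pair of (distinct) vertices `u, v` has its adjacency flipped by the flip `F`. -/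
def FlipsPair {V : Type*} (F : Set V × Set V) (u v : V) : Prop :=
  (u ∈ F.1 ∧ v ∈ F.2) ∨ (u ∈ F.2 ∧ v ∈ F.1)

open Classical

section FlipCount

variable {V : Type*}

noncomputable def flipCount (L : List (Set V × Set V)) (u v : V) : ℕ :=
  L.countP fun F => FlipsPair F u v

lemma flipsPair_comm (F : Set V × Set V) (u v : V) : FlipsPair F u v ↔ FlipsPair F v u := by
  unfold FlipsPair
  tauto

lemma flipCount_comm (L : List (Set V × Set V)) (u v : V) : flipCount L u v = flipCount L v u :=
  List.countP_congr fun F _ => by simp only [decide_eq_true_eq, flipsPair_comm F u v]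

lemma flipCount_cons (F : Set V × Set V) (L : List (Set V × Set V)) (u v : V) :
    flipCount (F :: L) u v = flipCount L u v + if FlipsPair F u v then 1 else 0 := by
  simp [flipCount, List.countP_cons]

lemma gflipAll_adj_iff (G : SimpleGraph V) (L : List (Set V × Set V)) (u v : V) :
    (gflipAll G L).Adj u v ↔ u ≠ v ∧ (G.Adj u v ↔ Even (flipCount L u v)) := by
  induction L generalizing G with
  | nil =>
    change G.Adj u v ↔ _
    simp only [flipCount, List.countP_nil, Even.zero, iff_true]
    exact ⟨fun h => ⟨G.ne_of_adj h, h⟩, And.right⟩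
  | cons F L ih =>
    change (gflipAll (gflip G F.1 F.2) L).Adj u v ↔ _
    rw [ih, flipCount_cons]
    change u ≠ v ∧ ((u ≠ v ∧ Xor (G.Adj u v) (FlipsPair F u v)) ↔ _) ↔ _
    by_cases hF : FlipsPair F u v
    · simp only [hF, if_true, Nat.even_add_one, Xor]
      tauto
    · simp only [hF, if_false, add_zero, Xor]
      tauto

lemma gflipAll_eq_of_even_flipCount_iff (G : SimpleGraph V) {L L' : List (Set V × Set V)}
    (h : ∀ u v, u ≠ v → (Even (flipCount L u v) ↔ Even (flipCount L' u v))) :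
    gflipAll G L = gflipAll G L' := by
  ext u v
  simp only [gflipAll_adj_iff]
  exact and_congr_right fun huv => by rw [h u v huv]

end FlipCount

lemma Finset.count_toList {α : Type*} [DecidableEq α] (S : Finset α) (a : α) :
    S.toList.count a = if a ∈ S then 1 else 0 := by
  split_ifs with h
  · exact List.count_eq_one_of_mem S.nodup_toList (S.mem_toList.mpr h)
  · exact List.count_eq_zero_of_not_mem (mt S.mem_toList.mp h)

section BlockFlips

variable {V T : Type*} (τ : V → T)

/-- Which representative of `z` is used is irrelevant, since `FlipsPair` is symmetric. -/
noncomputable def blockFlip (z : Sym2 T) : Set V × Set V :=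
  (τ ⁻¹' {z.out.1}, τ ⁻¹' {z.out.2})

lemma flipsPair_blockFlip_iff (z : Sym2 T) (u v : V) :
    FlipsPair (blockFlip τ z) u v ↔ s(τ u, τ v) = z := by
  conv_rhs => rw [← Quot.out_eq z]
  simp only [blockFlip, FlipsPair, Set.mem_preimage, Set.mem_singleton_iff]
  exact Sym2.eq_iff.symm

/-- Which representative of `z` is used is irrelevant, since `FlipsPair` is symmetric. -/
noncomputable def blockFlips (S : Finset (Sym2 T)) : List (Set V × Set V) :=
  S.toList.map (blockFlip τ)

variable (S : Finset (Sym2 T))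

lemma length_blockFlips : (blockFlips τ S).length = S.card := by
  simp [blockFlips]

lemma flipCount_blockFlips (u v : V) :
    flipCount (blockFlips τ S) u v = if s(τ u, τ v) ∈ S then 1 else 0 := by
  rw [← S.count_toList, List.count_eq_countP, flipCount, blockFlips, List.countP_map]
  refine List.countP_congr fun z _ => ?_
  simp only [Function.comp_apply, decide_eq_true_eq, beq_iff_eq, flipsPair_blockFlip_iff]
  exact eq_comm

lemma pairwise_blockFlips :
    (blockFlips τ S).Pairwise fun F₁ F₂ =>
      ∀ u v, ¬(FlipsPair F₁ u v ∧ FlipsPair F₂ u v) := by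
  refine List.pairwise_map.mpr (S.nodup_toList.imp fun hzw u v h => hzw ?_)
  simp only [flipsPair_blockFlip_iff] at h
  exact h.1.symm.trans h.2

end BlockFlips

section Signature

variable {V : Type*} (L : List (Set V × Set V))

noncomputable def flipSignature (v : V) : List.Vector (Bool × Bool) L.length :=
  ⟨L.map fun F => (decide (v ∈ F.1), decide (v ∈ F.2)), L.length_map _⟩

lemma card_vector_bool_prod (n : ℕ) :
    Fintype.card (List.Vector (Bool × Bool) n) = 2 ^ (2 * n) := by
  rw [card_vector, Fintype.card_prod, Fintype.card_bool, pow_mul]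
  norm_num

lemma flipCount_congr_flipSignature {u u' v v' : V} (hu : flipSignature L u = flipSignature L u')
    (hv : flipSignature L v = flipSignature L v') : flipCount L u v = flipCount L u' v' := by
  have side_iff {x x' : V} (h : flipSignature L x = flipSignature L x') :
      ∀ F ∈ L, (x ∈ F.1 ↔ x' ∈ F.1) ∧ (x ∈ F.2 ↔ x' ∈ F.2) := fun F hF => by
    have := List.map_eq_map_iff.mp (congrArg Subtype.val h) F hF
    simpa only [Prod.ext_iff, decide_eq_decide] using this
  refine List.countP_congr fun F hF => ?_
  obtain ⟨hu₁, hu₂⟩ := side_iff hu F hF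
  obtain ⟨hv₁, hv₂⟩ := side_iff hv F hF
  have hpair : FlipsPair F u v ↔ FlipsPair F u' v' := by
    rw [FlipsPair, FlipsPair, hu₁, hu₂, hv₁, hv₂]
  simp only [decide_eq_true_eq, hpair]

end Signature

lemma exists_finset_sym2_mem_iff {V T : Type*} [Fintype T] (τ : V → T) (R : V → V → Prop)
    (hR : ∀ {u v}, R u v → R v u)
    (hτ : ∀ {u u' v v'}, τ u = τ u' → τ v = τ v' → R u v → R u' v') :
    ∃ S : Finset (Sym2 T), ∀ u v, s(τ u, τ v) ∈ S ↔ R u v := by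
  refine ⟨Finset.univ.filter fun z => ∃ u v, s(τ u, τ v) = z ∧ R u v, fun u v => ?_⟩
  simp only [Finset.mem_filter, Finset.mem_univ, true_and]
  refine ⟨fun ⟨u', v', huv, hR'⟩ => ?_, fun h => ⟨u, v, rfl, h⟩⟩
  rcases Sym2.eq_iff.mp huv with ⟨hu, hv⟩ | ⟨hu, hv⟩
  · exact hτ hu hv hR'
  · exact hR (hτ hu hv hR')

/-- Any set of `k` flips is equivalent to a set of at most `C(2^(2k)+1, 2)` flips
such that no pair of vertices has its adjacency flipped more than once. -/
theorem exists_nonoverlapping_flips {V : Type*} (G : SimpleGraph V)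
    (L : List (Set V × Set V)) :
    ∃ L' : List (Set V × Set V),
      L'.length ≤ (2 ^ (2 * L.length) + 1).choose 2 ∧
      gflipAll G L = gflipAll G L' ∧
      L'.Pairwise (fun F₁ F₂ => ∀ u v : V, u ≠ v →
        ¬(FlipsPair F₁ u v ∧ FlipsPair F₂ u v)) := by
  obtain ⟨S, hS⟩ :=
    exists_finset_sym2_mem_iff (flipSignature L) (fun u v => Odd (flipCount L u v))
      (fun h => flipCount_comm L _ _ ▸ h)
      (fun hu hv h => flipCount_congr_flipSignature L hu hv ▸ h)
  refine ⟨blockFlips (flipSignature L) S, ?_, ?_, ?_⟩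
  · rw [length_blockFlips, ← card_vector_bool_prod, ← Sym2.card]
    exact S.card_le_univ
  · refine gflipAll_eq_of_even_flipCount_iff G fun u v _ => ?_
    rw [flipCount_blockFlips, ← Nat.not_odd_iff_even (n := flipCount L u v), ← hS]
    split_ifs with h <;> simp [h]
  · exact (pairwise_blockFlips _ S).imp fun h u v _ => h u v
end

section
/- Let G be a graph and let a₁,…,a_{t₀+1} be distinct vertices in P₁ such that every vertex u ∈ P₂ is adjacent in G to at least t₀ of the vertices a₁,…,a_{t₀+1}. If G contains no K_{t₀,t₀} subgraph with one side among {a₁,…,a_{t₀+1}} and the other side in P₂, then |P₂| ≤ (t₀−1)(t₀+1) + (t₀−1) = t₀² + t₀ − 2. -/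
/-!
Classify the vertices `u ∈ P₂` by the set of indices `i` with `u` not adjacent to `a i`. The
degree hypothesis makes this set have at most one element, so there are at most `t₀ + 2`
classes. All vertices of one class are adjacent to the same `t₀` (or more) of the `a i`, so a
class with `t₀` vertices would be a `K_{t₀,t₀}`; hence `|P₂| ≤ (t₀ - 1)(t₀ + 2)`.
-/

open Finset

namespace SimpleGraph

variable {V ι : Type*} (G : SimpleGraph V) [DecidableRel G.Adj] [Fintype ι] (a : ι → V)

def missedIndices (u : V) : Finset ι := {i | ¬ G.Adj u (a i)}

variable {G a}

lemma card_missedIndices_le_one {u : V}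
    (hu : Fintype.card ι ≤ #{i | G.Adj u (a i)} + 1) : #(G.missedIndices a u) ≤ 1 := by
  have := card_filter_add_card_filter_not (s := univ) (fun i => G.Adj u (a i))
  rw [card_univ] at this
  unfold missedIndices
  omega

lemma exists_biclique_of_le_card_fiber_missedIndices [DecidableEq ι] {s : Finset V}
    {S : Finset ι} {t : ℕ} (hS : t ≤ #Sᶜ) (hfiber : t ≤ #{u ∈ s | G.missedIndices a u = S}) :
    ∃ I : Finset ι, ∃ Y : Finset V, #I = t ∧ Y ⊆ s ∧ #Y = t ∧
      ∀ i ∈ I, ∀ y ∈ Y, G.Adj (a i) y := by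
  obtain ⟨I, hIS, hI⟩ := exists_subset_card_eq hS
  obtain ⟨Y, hYs, hY⟩ := exists_subset_card_eq hfiber
  refine ⟨I, Y, hI, hYs.trans (filter_subset _ _), hY, fun i hi y hy => ?_⟩
  have hyS := (mem_filter.1 (hYs hy)).2
  have hiS : i ∉ G.missedIndices a y := hyS ▸ mem_compl.1 (hIS hi)
  simpa [missedIndices, G.adj_comm] using hiS

end SimpleGraph

lemma Finset.card_image_le_card_add_one_of_card_le_one {α ι : Type*} [Fintype ι] [DecidableEq ι]
    {s : Finset α} {f : α → Finset ι} (hf : ∀ x ∈ s, #(f x) ≤ 1) :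
    #(s.image f) ≤ Fintype.card ι + 1 := by
  have hsub : s.image f ⊆ univ.image Option.toFinset := by
    intro S hS
    obtain ⟨x, hx, rfl⟩ := mem_image.1 hS
    rcases Nat.le_one_iff_eq_zero_or_eq_one.1 (hf x hx) with h | h
    · exact mem_image.2 ⟨none, mem_univ _, (card_eq_zero.1 h).symm⟩
    · obtain ⟨i, hi⟩ := card_eq_one.1 h
      exact mem_image.2 ⟨some i, mem_univ _, hi.symm⟩
  calc #(s.image f) ≤ #(univ.image (Option.toFinset : Option ι → Finset ι)) := card_le_card hsub
    _ ≤ Fintype.card (Option ι) := card_image_le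
    _ = Fintype.card ι + 1 := Fintype.card_option

theorem bound_on_P2_general {V : Type*} (G : SimpleGraph V) [DecidableRel G.Adj]
    (t₀ : ℕ) (P₂ : Finset V)
    (a : Fin (t₀ + 1) → V)
    (hdeg : ∀ u ∈ P₂, t₀ ≤ (Finset.univ.filter (fun i => G.Adj u (a i))).card)
    (hKtt : ¬ ∃ (I : Finset (Fin (t₀ + 1))) (Y : Finset V),
      I.card = t₀ ∧ Y ⊆ P₂ ∧ Y.card = t₀ ∧ (∀ i ∈ I, a i ∉ Y) ∧
      ∀ i ∈ I, ∀ y ∈ Y, G.Adj (a i) y) :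
    P₂.card ≤ t₀ ^ 2 + t₀ - 2 := by
  have hmissed (u) (hu : u ∈ P₂) : #(G.missedIndices a u) ≤ 1 :=
    SimpleGraph.card_missedIndices_le_one (by simpa using hdeg u hu)
  have hfiber : ∀ S ∈ P₂.image (G.missedIndices a),
      #{u ∈ P₂ | G.missedIndices a u = S} ≤ t₀ - 1 := by
    intro S hS
    obtain ⟨u, hu, rfl⟩ := mem_image.1 hS
    have hcompl : t₀ ≤ #(G.missedIndices a u)ᶜ := by
      rw [card_compl, Fintype.card_fin]; have := hmissed u hu; omega
    by_contra! hbig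
    obtain ⟨I, Y, hI, hYP, hY, hadj⟩ :=
      SimpleGraph.exists_biclique_of_le_card_fiber_missedIndices hcompl (Nat.le_of_pred_lt hbig)
    exact hKtt ⟨I, Y, hI, hYP, hY, fun i hi hiY => G.irrefl (hadj i hi _ hiY), hadj⟩
  calc #P₂ ≤ (t₀ - 1) * #(P₂.image (G.missedIndices a)) := card_le_mul_card_image _ _ hfiber
    _ ≤ (t₀ - 1) * (t₀ + 2) := by
      gcongr; simpa using card_image_le_card_add_one_of_card_le_one hmissed
    _ = t₀ ^ 2 + t₀ - 2 := by rw [Nat.sub_one_mul, sq]; ring_nf; omega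

/-- The counting argument: if `a₁,…,a_{t₀+1}` are distinct vertices of `P₁` such that
every vertex of `P₂` is adjacent to at least `t₀` of them, and `G` contains no
`K_{t₀,t₀}` with one side among the `aᵢ` and the other side in `P₂`, then
`|P₂| ≤ (t₀-1)(t₀+1) + (t₀-1) = t₀² + t₀ - 2`. -/
theorem bound_on_P2 {V : Type*} (G : SimpleGraph V) [DecidableRel G.Adj]
    (t₀ : ℕ) (ht₀ : 0 < t₀) (P₁ P₂ : Finset V)
    (a : Fin (t₀ + 1) → V) (ha_inj : Function.Injective a) (haP : ∀ i, a i ∈ P₁)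
    (hdeg : ∀ u ∈ P₂, t₀ ≤ (Finset.univ.filter (fun i => G.Adj u (a i))).card)
    (hKtt : ¬ ∃ (I : Finset (Fin (t₀ + 1))) (Y : Finset V),
      I.card = t₀ ∧ Y ⊆ P₂ ∧ Y.card = t₀ ∧ (∀ i ∈ I, a i ∉ Y) ∧
      ∀ i ∈ I, ∀ y ∈ Y, G.Adj (a i) y) :
    P₂.card ≤ t₀ ^ 2 + t₀ - 2 :=
  bound_on_P2_general G t₀ P₂ a hdeg hKtt
end
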